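/- arXiv:math-ph/0509009 — 2 statements merged into one kernel-verified Lean document; each statement's English description precedes it below -/
import Mathlib

section
/- Let $h_1, h_2 : [0,\infty) \to \mathbb{R}$ be positive, continuous, bounded functions. Define $m_1(t) = \frac{1}{t}\int_0^t h_1(s)\,ds$ and $m_2(t) = \frac{1}{t}\int_0^t h_2(s)\,ds$. Assume there is $C > 0$ such that $m_1(t) \geq C$ for all sufficiently large $t$, and that $m_2(t) \to 0$ as $t \to \infty$. Then for every $\delta > 0$ there exists a sequence $t_n \to \infty$ such that $m_1(t_n) \geq \frac{1}{1+\delta} h_1(t_n)$ for all $n$ and $h_2(t_n) \to 0$ as $n \to \infty$. -/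
/-! Put `F t = ∫₀ᵗ h₁` and call `t` good when `t h₁(t) ≤ (1 + δ) F(t)`. Off the good set
`(log F)' = h₁ / F > (1 + δ) / t`, whereas `C t ≤ F t ≤ M t` caps the growth of `log F`
over `(T, K T]` at `log K + log (M / C)`. For `K` large this forces the good set to fill a fixed
fraction `T / (1 + δ)` of every interval `(T, K T]`, while by Markov's inequality the set where
`h₂ ≥ ε` fills only `o(T)` of it, because the Cesàro means of `h₂` tend to `0`. -/

open MeasureTheory Filter Set Real Topology

theorem mul_log_div_le_log_sub_log_add {f F : ℝ → ℝ} {a b p : ℝ} (ha : 0 < a)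
    (hab : a ≤ b) (hp : 0 ≤ p) (hf : Continuous f) (hF : ∀ x, HasDerivAt F (f x) x)
    (hf0 : ∀ x ∈ Icc a b, 0 ≤ f x) (hF0 : ∀ x ∈ Icc a b, 0 < F x) :
    p * log (b / a) ≤
      log (F b) - log (F a) + p / a * volume.real ({x | x * f x ≤ p * F x} ∩ Ioc a b) := by
  set G := {x | x * f x ≤ p * F x}
  have hFc : Continuous F := continuous_iff_continuousAt.2 fun x => (hF x).continuousAt
  have hG : MeasurableSet G := measurableSet_le (by fun_prop) (by fun_prop)
  have hI : uIcc a b = Icc a b := uIcc_of_le hab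
  have hpos : ∀ x ∈ Icc a b, 0 < x := fun x hx => ha.trans_le hx.1
  have hinv : IntervalIntegrable (fun x => p * x⁻¹) volume a b :=
    (intervalIntegral.intervalIntegrable_inv (fun x hx => (hpos x (hI ▸ hx)).ne')
      continuousOn_id).const_mul p
  have hquot : IntervalIntegrable (fun x => f x / F x) volume a b :=
    ContinuousOn.intervalIntegrable <| hI ▸
      hf.continuousOn.div hFc.continuousOn fun x hx => (hF0 x hx).ne'
  have hindI : IntervalIntegrable (G.indicator fun _ => p / a) volume a b :=
    (intervalIntegrable_iff_integrableOn_Ioc_of_le hab).2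
      ((integrableOn_const measure_Ioc_lt_top.ne).indicator hG)
  have hlog : ∫ x in a..b, f x / F x = log (F b) - log (F a) :=
    intervalIntegral.integral_eq_sub_of_hasDerivAt (f := fun x => log (F x))
      (fun x hx => (hF x).log (hF0 x (hI ▸ hx)).ne') hquot
  have hind :
      ∫ x in a..b, G.indicator (fun _ => p / a) x = p / a * volume.real (G ∩ Ioc a b) := by
    rw [intervalIntegral.integral_of_le hab, integral_indicator_const _ hG,
      measureReal_restrict_apply hG, smul_eq_mul, mul_comm]
  have hpt : ∀ x ∈ Icc a b, p * x⁻¹ ≤ f x / F x + G.indicator (fun _ => p / a) x := by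
    intro x hx
    by_cases hxG : x ∈ G
    · rw [indicator_of_mem hxG]
      have : p * x⁻¹ ≤ p / a := by
        rw [← div_eq_mul_inv]; exact div_le_div_of_nonneg_left hp ha hx.1
      have : 0 ≤ f x / F x := div_nonneg (hf0 x hx) (hF0 x hx).le
      linarith
    · rw [indicator_of_notMem hxG, add_zero, ← div_eq_mul_inv,
        div_le_div_iff₀ (hpos x hx) (hF0 x hx)]
      exact (not_le.1 hxG).le.trans_eq (mul_comm _ _)
  have hmono := intervalIntegral.integral_mono_on hab hinv (hquot.add hindI) hpt
  rwa [intervalIntegral.integral_const_mul, integral_inv_of_pos ha (ha.trans_le hab),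
    intervalIntegral.integral_add hquot hindI, hlog, hind] at hmono

theorem log_sub_log_le_log_div_add_log_div {u v a b C M : ℝ} (ha : 0 < a) (hC : 0 < C)
    (hu : C * a ≤ u) (hv : 0 < v) (hvb : v ≤ M * b) :
    log v - log u ≤ log (b / a) + log (M / C) := by
  have hu0 : 0 < u := (mul_pos hC ha).trans_le hu
  have hMb : 0 < M * b := hv.trans_le hvb
  rw [← log_div hv.ne' hu0.ne', ← log_mul (div_ne_zero (right_ne_zero_of_mul hMb.ne') ha.ne')
    (div_ne_zero (left_ne_zero_of_mul hMb.ne') hC.ne')]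
  refine log_le_log (div_pos hv hu0) ?_
  calc v / u ≤ M * b / (C * a) := div_le_div₀ hMb.le hvb (mul_pos hC ha) hu
    _ = b / a * (M / C) := by field_simp

theorem exists_lt_of_setIntegral_lt {α : Type*} [MeasurableSpace α] {μ : Measure α}
    {g : α → ℝ} {s u : Set α} {ε : ℝ} (hs : MeasurableSet s) (hμs : μ s ≠ ⊤)
    (hu : MeasurableSet u) (hsu : s ⊆ u) (hgu : IntegrableOn g u μ) (hg : ∀ x ∈ u, 0 ≤ g x)
    (h : ∫ x in u, g x ∂μ < ε * μ.real s) : ∃ x ∈ s, g x < ε := by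
  by_contra! hge
  have := setIntegral_ge_of_const_le_real hs hμs hge (hgu.mono_set hsu)
  have := setIntegral_mono_set hgu ((ae_restrict_iff' hu).2 (ae_of_all _ hg)) hsu.eventuallyLE
  linarith

theorem frequently_mul_le_and_lt {f g F : ℝ → ℝ} {C M δ ε : ℝ} (hC : 0 < C) (hδ : 0 < δ)
    (hε : 0 < ε) (hf : Continuous f) (hF : ∀ x, HasDerivAt F (f x) x)
    (hf0 : ∀ᶠ x in atTop, 0 ≤ f x) (hlow : ∀ᶠ t in atTop, C * t ≤ F t)
    (hup : ∀ᶠ t in atTop, F t ≤ M * t) (hg : Continuous g) (hg0 : ∀ x, 0 < x → 0 ≤ g x)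
    (hmean : Tendsto (fun t => (1 / t) * ∫ s in (0:ℝ)..t, g s) atTop (𝓝 0)) :
    ∃ᶠ t in atTop, t * f t ≤ (1 + δ) * F t ∧ g t < ε := by
  rw [frequently_atTop]
  intro X
  obtain ⟨K, hK1, hKlog⟩ : ∃ K, 1 ≤ K ∧ 1 + log (M / C) ≤ δ * log K :=
    ((eventually_ge_atTop 1).and
      ((tendsto_log_atTop.const_mul_atTop hδ).eventually_ge_atTop _)).exists
  have hK0 : 0 < K := one_pos.trans_le hK1
  have hp : 0 < 1 + δ := by linarith
  have hsmall : ∀ᶠ T in atTop,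
      (1 / (K * T)) * ∫ s in (0:ℝ)..K * T, g s < ε / ((1 + δ) * K) :=
    (hmean.comp (tendsto_id.const_mul_atTop hK0)).eventually (gt_mem_nhds (by positivity))
  obtain ⟨T₁, hT₁⟩ := eventually_atTop.1 (hlow.and (hup.and hf0))
  obtain ⟨T, hTsmall, hTX, hTT₁, hT0⟩ := (hsmall.and ((eventually_ge_atTop X).and
    ((eventually_ge_atTop T₁).and (eventually_gt_atTop 0)))).exists
  have hTK : T ≤ K * T := le_mul_of_one_le_left hT0.le hK1
  have hFpos : ∀ x ∈ Icc T (K * T), 0 < F x := fun x hx =>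
    (mul_pos hC (hT0.trans_le hx.1)).trans_le (hT₁ x (hTT₁.trans hx.1)).1
  set G := {x | x * f x ≤ (1 + δ) * F x}
  have hgrowth := mul_log_div_le_log_sub_log_add hT0 hTK hp.le hf hF
    (fun x hx => (hT₁ x (hTT₁.trans hx.1)).2.2) hFpos
  have hlogs := log_sub_log_le_log_div_add_log_div hT0 hC (hT₁ T hTT₁).1
    (hFpos _ ⟨hTK, le_rfl⟩) (hT₁ (K * T) (hTT₁.trans hTK)).2.1
  rw [mul_div_cancel_right₀ _ hT0.ne'] at hgrowth hlogs
  have hvol : T / (1 + δ) ≤ volume.real (G ∩ Ioc T (K * T)) := by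
    have h1 : 1 ≤ (1 + δ) / T * volume.real (G ∩ Ioc T (K * T)) := by linarith
    rwa [div_mul_eq_mul_div, le_div_iff₀ hT0, one_mul, ← div_le_iff₀' hp] at h1
  have hint : ∫ s in Ioc 0 (K * T), g s < ε * volume.real (G ∩ Ioc T (K * T)) := by
    rw [← intervalIntegral.integral_of_le (by positivity)]
    rw [one_div_mul_eq_div, div_lt_iff₀ (by positivity)] at hTsmall
    calc _ < ε / ((1 + δ) * K) * (K * T) := hTsmall
      _ = ε * (T / (1 + δ)) := by field_simp
      _ ≤ _ := by gcongr
  have hFc : Continuous F := continuous_iff_continuousAt.2 fun x => (hF x).continuousAt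
  have hG : MeasurableSet G := measurableSet_le (by fun_prop) (by fun_prop)
  obtain ⟨t, ⟨htG, htI⟩, hgt⟩ := exists_lt_of_setIntegral_lt (hG.inter measurableSet_Ioc)
    (measure_inter_lt_top_of_right_ne_top measure_Ioc_lt_top.ne).ne measurableSet_Ioc
    (fun x hx => ⟨hT0.trans hx.2.1, hx.2.2⟩) hg.integrableOn_Ioc (fun x hx => hg0 x hx.1) hint
  exact ⟨t, hTX.trans htI.1.le, htG, hgt⟩

theorem subsequence_lemma_general
    (h₁ h₂ : ℝ → ℝ)
    (hpos₁ : ∀ s, 0 ≤ s → 0 < h₁ s) (hpos₂ : ∀ s, 0 ≤ s → 0 < h₂ s)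
    (hcont₁ : Continuous h₁) (hcont₂ : Continuous h₂)
    (hbdd₁ : ∃ M, ∀ s, 0 ≤ s → h₁ s ≤ M)
    (m₁ m₂ : ℝ → ℝ)
    (hm₁ : ∀ t, m₁ t = (1 / t) * ∫ s in (0:ℝ)..t, h₁ s)
    (hm₂ : ∀ t, m₂ t = (1 / t) * ∫ s in (0:ℝ)..t, h₂ s)
    (C : ℝ) (hC : 0 < C) (hlow : ∀ᶠ t in atTop, C ≤ m₁ t)
    (hto0 : Tendsto m₂ atTop (nhds 0))
    (δ : ℝ) (hδ : 0 < δ) :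
    ∃ t : ℕ → ℝ, Tendsto t atTop atTop ∧
      (∀ n, (1 / (1 + δ)) * h₁ (t n) ≤ m₁ (t n)) ∧
      Tendsto (fun n => h₂ (t n)) atTop (nhds 0) := by
  rw [show m₂ = _ from funext hm₂] at hto0
  obtain ⟨M, hM⟩ := hbdd₁
  have hlowF : ∀ᶠ t in atTop, C * t ≤ ∫ s in (0:ℝ)..t, h₁ s :=
    (hlow.and (eventually_gt_atTop 0)).mono fun t ⟨h, ht⟩ => by
      rwa [hm₁, one_div_mul_eq_div, le_div_iff₀ ht] at h
  have hupF : ∀ᶠ t in atTop, ∫ s in (0:ℝ)..t, h₁ s ≤ M * t :=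
    (eventually_ge_atTop 0).mono fun t ht => by
      simpa [mul_comm] using intervalIntegral.integral_mono_on (μ := volume) ht
        (hcont₁.intervalIntegrable _ _) intervalIntegrable_const fun s hs => hM s hs.1
  have hgood : ∀ n : ℕ, ∃ t, (t * h₁ t ≤ (1 + δ) * (∫ s in (0:ℝ)..t, h₁ s) ∧
      h₂ t < 1 / ((n : ℝ) + 1)) ∧ (n : ℝ) + 1 ≤ t := fun n =>
    ((frequently_mul_le_and_lt hC hδ (by positivity) hcont₁
      (fun x => (hcont₁.integral_hasStrictDerivAt 0 x).hasDerivAt)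
      ((eventually_ge_atTop 0).mono fun x hx => (hpos₁ x hx).le) hlowF hupF hcont₂
      (fun x hx => (hpos₂ x hx.le).le) hto0).and_eventually (eventually_ge_atTop _)).exists
  choose t ht using hgood
  have ht0 : ∀ n, 0 < t n := fun n => (Nat.cast_add_one_pos n).trans_le (ht n).2
  refine ⟨t, tendsto_atTop_mono (fun n => (ht n).2)
    (tendsto_atTop_add_const_right _ 1 tendsto_natCast_atTop_atTop), fun n => ?_, ?_⟩
  · rw [hm₁, one_div_mul_eq_div, one_div_mul_eq_div, div_le_div_iff₀ (by positivity) (ht0 n)]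
    linarith [(ht n).1.1]
  · exact squeeze_zero (fun n => (hpos₂ _ (ht0 n).le).le) (fun n => (ht n).1.2.le)
      tendsto_one_div_add_atTop_nhds_zero_nat

/-- Subsequence extraction lemma (Lemma 4.4): for positive continuous bounded
`h₁, h₂` on `[0,∞)` with Cesàro mean of `h₁` bounded below and Cesàro mean of
`h₂` tending to `0`, there is a sequence `tₙ → ∞` along which
`m₁ (tₙ) ≥ h₁ (tₙ) / (1+δ)` and `h₂ (tₙ) → 0`. -/
theorem subsequence_lemma
    (h₁ h₂ : ℝ → ℝ)
    (hpos₁ : ∀ s, 0 ≤ s → 0 < h₁ s) (hpos₂ : ∀ s, 0 ≤ s → 0 < h₂ s)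
    (hcont₁ : Continuous h₁) (hcont₂ : Continuous h₂)
    (hbdd₁ : ∃ M, ∀ s, 0 ≤ s → h₁ s ≤ M) (hbdd₂ : ∃ M, ∀ s, 0 ≤ s → h₂ s ≤ M)
    (m₁ m₂ : ℝ → ℝ)
    (hm₁ : ∀ t, m₁ t = (1 / t) * ∫ s in (0:ℝ)..t, h₁ s)
    (hm₂ : ∀ t, m₂ t = (1 / t) * ∫ s in (0:ℝ)..t, h₂ s)
    (C : ℝ) (hC : 0 < C) (hlow : ∀ᶠ t in atTop, C ≤ m₁ t)
    (hto0 : Tendsto m₂ atTop (nhds 0))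
    (δ : ℝ) (hδ : 0 < δ) :
    ∃ t : ℕ → ℝ, Tendsto t atTop atTop ∧
      (∀ n, (1 / (1 + δ)) * h₁ (t n) ≤ m₁ (t n)) ∧
      Tendsto (fun n => h₂ (t n)) atTop (nhds 0) :=
  subsequence_lemma_general h₁ h₂ hpos₁ hpos₂ hcont₁ hcont₂ hbdd₁ m₁ m₂ hm₁ hm₂ C hC hlow hto0 δ hδ
end

section
/- Let $h : [0,\infty) \to \mathbb{R}$ be positive, continuous and bounded, let $m(t) = \frac{1}{t}\int_0^t h(s)\,ds$, and suppose there is $C>0$ with $m(t) \geq C$ for all sufficiently large $t$. Fix $\delta > 0$ and define $S_T = \{ t \in [0,T] : m(t) < \frac{1}{1+\delta} h(t) \}$. Then $\liminf_{T \to \infty} \frac{\mu(S_T)}{T} < 1$, where $\mu$ denotes Lebesgue measure. -/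
/-!
Write `F t = ∫₀ᵗ h`, so that `m = F / t ≤ M`. The derivative `h / F` of `log F` is positive, and on
the bad set it exceeds `(1 + δ) / t`. If the bad set had density close to `1` in every `[0, T]`,
then over each block `[a, (1 + δ) a]` with `a` large, `log F` would gain more than
`log (1 + δ) + ε` for a fixed `ε > 0`. Hence `log m = log F - log t` would gain `ε` on every block
and be unbounded, contradicting `m ≤ M`.
-/

open MeasureTheory Filter Set Real

theorem mul_measureReal_inter_Ioc_le_sub {g g' : ℝ → ℝ} {S : Set ℝ} (hS : MeasurableSet S)
    {a b c : ℝ} (hab : a ≤ b) (hg : ContinuousOn g (Icc a b))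
    (hderiv : ∀ x ∈ Ioo a b, HasDerivAt g (g' x) x) (hg'_nonneg : ∀ x ∈ Ioo a b, 0 ≤ g' x)
    (hg'_ge : ∀ x ∈ Ioo a b, x ∈ S → c ≤ g' x) :
    c * volume.real (S ∩ Ioc a b) ≤ g b - g a := by
  have hint : ∫ x in a..b, S.indicator (fun _ => c) x = c * volume.real (S ∩ Ioc a b) := by
    rw [intervalIntegral.integral_of_le hab, integral_indicator_const _ hS,
      measureReal_restrict_apply hS, smul_eq_mul, mul_comm]
  rw [← hint]
  refine intervalIntegral.integral_le_sub_of_hasDeriv_right_of_le hab hg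
    (fun x hx => (hderiv x hx).hasDerivWithinAt)
    ((integrableOn_const measure_Icc_lt_top.ne).indicator hS) ?_
  intro x hx
  by_cases hxS : x ∈ S
  · simpa [hxS] using hg'_ge x hx hxS
  · simpa [hxS] using hg'_nonneg x hx

theorem measureReal_Icc_zero_inter_le (S : Set ℝ) {a : ℝ} (ha : 0 ≤ a) (b : ℝ) :
    volume.real (Icc 0 b ∩ S) ≤ a + volume.real (S ∩ Ioc a b) := by
  have hsplit : Icc 0 b ∩ S ⊆ Icc 0 a ∪ (S ∩ Ioc a b) := by
    rintro x ⟨⟨hx0, hxb⟩, hxS⟩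
    rcases le_or_gt x a with hxa | hax
    · exact Or.inl ⟨hx0, hxa⟩
    · exact Or.inr ⟨hxS, hax, hxb⟩
  calc volume.real (Icc 0 b ∩ S) ≤ volume.real (Icc 0 a ∪ (S ∩ Ioc a b)) :=
        measureReal_mono hsplit (measure_union_ne_top (by simp)
          (measure_ne_top_of_subset inter_subset_right (by simp)))
    _ ≤ volume.real (Icc 0 a) + volume.real (S ∩ Ioc a b) := measureReal_union_le _ _
    _ = a + volume.real (S ∩ Ioc a b) := by simp [Real.volume_real_Icc, ha]

theorem not_isBoundedUnder_of_eventually_add_le_comp_mul {g : ℝ → ℝ} {c ε : ℝ} (hc : 1 ≤ c)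
    (hε : 0 < ε) (hg : ∀ᶠ a in atTop, g a + ε ≤ g (c * a)) :
    ¬ IsBoundedUnder (· ≤ ·) atTop g := by
  rintro ⟨B, hB⟩
  obtain ⟨a₀, ha₀⟩ :=
    eventually_atTop.1 ((hg.and (eventually_map.1 hB)).and (eventually_ge_atTop 0))
  have hnonneg : 0 ≤ a₀ := (ha₀ a₀ le_rfl).2
  have hgrow : ∀ n : ℕ, a₀ ≤ c ^ n * a₀ ∧ g a₀ + n * ε ≤ g (c ^ n * a₀) := by
    intro n
    induction n with
    | zero => simp
    | succ n ih =>
      have hstep := (ha₀ _ ih.1).1.1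
      rw [← mul_assoc, ← pow_succ'] at hstep
      refine ⟨ih.1.trans ?_, ?_⟩
      · exact mul_le_mul_of_nonneg_right (pow_le_pow_right₀ hc n.le_succ) hnonneg
      · push_cast; linarith [ih.2]
  obtain ⟨n, hn⟩ := exists_nat_gt ((B - g a₀) / ε)
  rw [div_lt_iff₀ hε] at hn
  linarith [(hgrow n).2, (ha₀ _ (hgrow n).1).1.2]

theorem eventually_mul_le_measureReal_of_one_le_liminf {S : Set ℝ}
    (hS : 1 ≤ liminf (fun T => volume.real (Icc 0 T ∩ S) / T) atTop) {α : ℝ} (hα : α < 1) :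
    ∀ᶠ T in atTop, α * T ≤ volume.real (Icc 0 T ∩ S) := by
  have hbdd : IsBoundedUnder (· ≥ ·) atTop fun T => volume.real (Icc 0 T ∩ S) / T :=
    ⟨0, eventually_map.2 <| (eventually_gt_atTop 0).mono fun T hT => by positivity⟩
  filter_upwards [eventually_lt_of_lt_liminf (hα.trans_le hS) hbdd, eventually_gt_atTop 0]
    with T hT hTpos
  exact ((lt_div_iff₀ hTpos).1 hT).le

theorem exists_lt_one_add_log_lt_mul {κ : ℝ} (hκ : 1 < κ) : ∃ α < 1, 1 + log κ < κ * α := by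
  have hlog : log κ < κ - 1 := log_lt_sub_one_of_pos (by linarith) hκ.ne'
  refine ⟨(1 + log κ + κ) / (2 * κ), ?_, ?_⟩
  · rw [div_lt_one (by linarith)]; linarith
  · rw [mul_div_assoc', lt_div_iff₀ (by linarith)]; nlinarith

section Primitive

variable {h : ℝ → ℝ}

theorem integral_zero_pos (hcont : Continuous h) (hpos : ∀ s, 0 ≤ s → 0 < h s) {t : ℝ}
    (ht : 0 < t) : 0 < ∫ s in (0 : ℝ)..t, h s :=
  intervalIntegral.intervalIntegral_pos_of_pos_on (hcont.intervalIntegrable _ _)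
    (fun x hx => hpos x hx.1.le) ht

theorem mul_measureReal_le_log_integral_sub (hcont : Continuous h)
    (hpos : ∀ s, 0 ≤ s → 0 < h s) {S : Set ℝ} (hS : MeasurableSet S) {κ a b : ℝ} (hκ : 0 ≤ κ)
    (ha : 0 < a) (hab : a ≤ b) (hSκ : ∀ t ∈ S, 0 < t → κ * ∫ s in (0 : ℝ)..t, h s ≤ t * h t) :
    κ / b * volume.real (S ∩ Ioc a b) ≤
      log (∫ s in (0 : ℝ)..b, h s) - log (∫ s in (0 : ℝ)..a, h s) := by
  set F : ℝ → ℝ := fun t => ∫ s in (0 : ℝ)..t, h s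
  have hFderiv (t : ℝ) : HasDerivAt F (h t) t :=
    intervalIntegral.integral_hasDerivAt_right (hcont.intervalIntegrable _ _)
      (hcont.stronglyMeasurableAtFilter _ _) hcont.continuousAt
  have hFpos (t : ℝ) (ht : 0 < t) : 0 < F t := integral_zero_pos hcont hpos ht
  refine mul_measureReal_inter_Ioc_le_sub (g := fun t => log (F t)) (g' := fun t => h t / F t)
    hS hab ?_ ?_ ?_ ?_
  · intro x hx
    exact ((hFderiv x).continuousAt.log (hFpos x (ha.trans_le hx.1)).ne').continuousWithinAt
  · intro x hx
    exact (hFderiv x).log (hFpos x (ha.trans hx.1)).ne'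
  · intro x hx
    exact div_nonneg (hpos x (ha.trans hx.1).le).le (hFpos x (ha.trans hx.1)).le
  · intro x hx hxS
    have hx0 : 0 < x := ha.trans hx.1
    calc κ / b ≤ κ / x := div_le_div_of_nonneg_left hκ hx0 hx.2.le
      _ ≤ h x / F x := by
        rw [div_le_div_iff₀ hx0 (hFpos x hx0)]
        linarith [hSκ x hxS hx0]

theorem log_integral_sub_log_add_le (hcont : Continuous h)
    (hpos : ∀ s, 0 ≤ s → 0 < h s) {S : Set ℝ} (hS : MeasurableSet S) {κ α a : ℝ} (hκ : 1 ≤ κ)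
    (ha : 0 < a) (hSκ : ∀ t ∈ S, 0 < t → κ * ∫ s in (0 : ℝ)..t, h s ≤ t * h t)
    (hdens : α * (κ * a) ≤ volume.real (Icc 0 (κ * a) ∩ S)) :
    log (∫ s in (0 : ℝ)..a, h s) - log a + (κ * α - 1 - log κ) ≤
      log (∫ s in (0 : ℝ)..κ * a, h s) - log (κ * a) := by
  have hblock := mul_measureReal_le_log_integral_sub hcont hpos hS (by linarith) ha
    (le_mul_of_one_le_left ha.le hκ) hSκ
  have hsplit := measureReal_Icc_zero_inter_le S ha.le (κ * a)
  have hcoef : κ / (κ * a) = 1 / a := by field_simp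
  have hgain : κ * α - 1 ≤ 1 / a * volume.real (S ∩ Ioc a (κ * a)) :=
    calc κ * α - 1 = 1 / a * (α * (κ * a) - a) := by field_simp
      _ ≤ 1 / a * volume.real (S ∩ Ioc a (κ * a)) := by gcongr; linarith
  rw [hcoef] at hblock
  rw [log_mul (by linarith) ha.ne']
  linarith

theorem log_integral_sub_log_le {M : ℝ} (hcont : Continuous h) (hpos : ∀ s, 0 ≤ s → 0 < h s)
    (hM : ∀ s, 0 ≤ s → h s ≤ M) {t : ℝ} (ht : 0 < t) :
    log (∫ s in (0 : ℝ)..t, h s) - log t ≤ log M := by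
  have hint : ∫ s in (0 : ℝ)..t, h s ≤ M * t := by
    have := intervalIntegral.integral_mono_on (μ := volume) ht.le
      (hcont.intervalIntegrable _ _) intervalIntegrable_const fun s hs => hM s hs.1
    simpa [mul_comm] using this
  have hM0 : 0 < M := (hpos 0 le_rfl).trans_le (hM 0 le_rfl)
  have := log_le_log (integral_zero_pos hcont hpos ht) hint
  rw [log_mul hM0.ne' ht.ne'] at this
  linarith

end Primitive

theorem bad_set_density_lt_one_general
    (h : ℝ → ℝ)
    (hpos : ∀ s, 0 ≤ s → 0 < h s)
    (hcont : Continuous h)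
    (hbdd : ∃ M, ∀ s, 0 ≤ s → h s ≤ M)
    (m : ℝ → ℝ)
    (hm : ∀ t, m t = (1 / t) * ∫ s in (0:ℝ)..t, h s)
    (δ : ℝ) (hδ : 0 < δ) :
    Filter.liminf
      (fun T =>
        (volume {t : ℝ | t ∈ Set.Icc (0:ℝ) T ∧ m t < (1 / (1 + δ)) * h t}).toReal / T)
      atTop < 1 := by
  obtain rfl : m = fun t => 1 / t * ∫ s in (0:ℝ)..t, h s := funext hm
  obtain ⟨M, hM⟩ := hbdd
  set S := {t : ℝ | 1 / t * (∫ s in (0:ℝ)..t, h s) < 1 / (1 + δ) * h t}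
  have hF : Continuous fun t => ∫ s in (0:ℝ)..t, h s :=
    intervalIntegral.continuous_primitive (fun _ _ => hcont.intervalIntegrable _ _) 0
  have hS : MeasurableSet S := measurableSet_lt
    ((measurable_const.div measurable_id).mul hF.measurable) (hcont.measurable.const_mul _)
  have hSκ : ∀ t ∈ S, 0 < t → (1 + δ) * ∫ s in (0:ℝ)..t, h s ≤ t * h t := by
    intro t (ht : 1 / t * _ < _) ht0
    rw [one_div_mul_eq_div, one_div_mul_eq_div, div_lt_div_iff₀ ht0 (by linarith)] at ht
    linarith
  obtain ⟨α, hα1, hακ⟩ := exists_lt_one_add_log_lt_mul (by linarith : 1 < 1 + δ)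
  by_contra! hfull
  have hdens := eventually_mul_le_measureReal_of_one_le_liminf (S := S) hfull hα1
  refine not_isBoundedUnder_of_eventually_add_le_comp_mul
    (g := fun t => log (∫ s in (0:ℝ)..t, h s) - log t) (by linarith : 1 ≤ 1 + δ)
    (by linarith : 0 < (1 + δ) * α - 1 - log (1 + δ)) ?_ ⟨log M, ?_⟩
  · filter_upwards [eventually_gt_atTop 0,
      (tendsto_id.const_mul_atTop (by linarith : 0 < 1 + δ)).eventually hdens] with a ha hda
    exact log_integral_sub_log_add_le hcont hpos hS (by linarith) ha hSκ hda
  · exact eventually_map.2 <| (eventually_gt_atTop 0).mono fun t ht =>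
      log_integral_sub_log_le hcont hpos hM ht

/-- Density claim (eq. (4.41)): if the Cesàro mean `m` of a positive continuous
bounded `h` is eventually bounded below by `C > 0`, then the "bad" set
`S_T = {t ∈ [0,T] : m t < h t / (1+δ)}` cannot have asymptotically full
density in `[0,T]`. -/
theorem bad_set_density_lt_one
    (h : ℝ → ℝ)
    (hpos : ∀ s, 0 ≤ s → 0 < h s)
    (hcont : Continuous h)
    (hbdd : ∃ M, ∀ s, 0 ≤ s → h s ≤ M)
    (m : ℝ → ℝ)
    (hm : ∀ t, m t = (1 / t) * ∫ s in (0:ℝ)..t, h s)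
    (C : ℝ) (hC : 0 < C) (hlow : ∀ᶠ t in atTop, C ≤ m t)
    (δ : ℝ) (hδ : 0 < δ) :
    Filter.liminf
      (fun T =>
        (volume {t : ℝ | t ∈ Set.Icc (0:ℝ) T ∧ m t < (1 / (1 + δ)) * h t}).toReal / T)
      atTop < 1 :=
  bad_set_density_lt_one_general h hpos hcont hbdd m hm δ hδ
end
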